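/- Let G = ((A,B),E_G) be a connected finite bipartite graph with 1 ≤ |A| ≤ |B|. Then γ(G) = |A| if and only if G is (isomorphic to) the bipartization B_f(H) of a connected finite simple graph H with respect to a non-zero function f : 𝒦_H → ℕ satisfying both: (1) whenever uv is an edge of H with f(H[u,v]) = 0, there exists a complete subgraph H′ of H containing the edge uv with f(H′) > 0; and (2) whenever uv is an edge of H with f(H[u]) = f(H[v]) = 0, one has f(H[u,v]) ≥ 2. -/

import Mathlib

/-- `K` is the vertex set of a (nonempty) complete subgraph (clique) of `H`. -/
def IsCliqueF {V : Type*} (H : SimpleGraph V) (K : Finset V) : Prop :=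
  K.Nonempty ∧ ∀ x ∈ K, ∀ y ∈ K, x ≠ y → H.Adj x y

instance {V : Type*} [DecidableEq V] (H : SimpleGraph V) [DecidableRel H.Adj] :
    DecidablePred (IsCliqueF H) := fun K => by
  unfold IsCliqueF; infer_instance

/-- The family `𝒦_H` of all complete subgraphs (cliques) of `H`. -/
abbrev CliqueSet {V : Type*} (H : SimpleGraph V) := {K : Finset V // IsCliqueF H K}

/-- The vertex type of the bipartization `B_f(H)`: the partite set `A` is `V_H`
(the `Sum.inl` part) and the partite set `B` is `⋃_K 𝓕_K`, where
`𝓕_K = {(K,1),…,(K,f K)}` is encoded as `Σ K, Fin (f K)` (the `Sum.inr` part). -/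
abbrev BVert {V : Type*} (H : SimpleGraph V) (f : Finset V → ℕ) :=
  V ⊕ (Σ K : CliqueSet H, Fin (f K.1))

/-- The bipartization `B_f(H)` of `H` with respect to `f`: a vertex `x ∈ A` is
adjacent to `(K, i) ∈ B` iff `x` is a vertex of `K`. -/
def Bip {V : Type*} (H : SimpleGraph V) (f : Finset V → ℕ) : SimpleGraph (BVert H f) where
  Adj a b :=
    (∃ (x : V) (p : Σ K : CliqueSet H, Fin (f K.1)),
        a = Sum.inl x ∧ b = Sum.inr p ∧ x ∈ p.1.1) ∨
    (∃ (x : V) (p : Σ K : CliqueSet H, Fin (f K.1)),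
        b = Sum.inl x ∧ a = Sum.inr p ∧ x ∈ p.1.1)
  symm := by
    constructor
    rintro a b (⟨x, p, rfl, rfl, hx⟩ | ⟨x, p, rfl, rfl, hx⟩)
    · exact Or.inr ⟨x, p, rfl, rfl, hx⟩
    · exact Or.inl ⟨x, p, rfl, rfl, hx⟩
  loopless := by
    constructor
    rintro a (⟨x, p, h1, h2, _⟩ | ⟨x, p, h1, h2, _⟩) <;> subst h1 <;> simp at h2

/-- `D` is a dominating set of `G`. -/
def IsDomSet {W : Type*} (G : SimpleGraph W) (D : Set W) : Prop :=
  ∀ v ∉ D, ∃ u ∈ D, G.Adj u v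

/-- The domination number `γ(G)`. -/
noncomputable def domNum {W : Type*} (G : SimpleGraph W) : ℕ :=
  sInf {n | ∃ D : Set W, IsDomSet G D ∧ D.ncard = n}

/-- `C` is a covering (vertex cover) set of `G`. -/
def IsCoverSet {W : Type*} (G : SimpleGraph W) (C : Set W) : Prop :=
  ∀ u v, G.Adj u v → u ∈ C ∨ v ∈ C

/-- The covering number `β(G)`. -/
noncomputable def coverNum {W : Type*} (G : SimpleGraph W) : ℕ :=
  sInf {n | ∃ C : Set W, IsCoverSet G C ∧ C.ncard = n}

/-- A leaf is a vertex of degree one. -/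
def IsLeaf {W : Type*} (G : SimpleGraph W) (v : W) : Prop := (G.neighborSet v).ncard = 1

/-- A support vertex is a vertex adjacent to a leaf. -/
def IsSupport {W : Type*} (G : SimpleGraph W) (v : W) : Prop := ∃ u, G.Adj v u ∧ IsLeaf G u

/-- A weak support is a vertex adjacent to exactly one leaf. -/
def IsWeakSupport {W : Type*} (G : SimpleGraph W) (v : W) : Prop :=
  {u | G.Adj v u ∧ IsLeaf G u}.ncard = 1

/-- `S` induces a block of `G`: a maximal connected subgraph without a cutvertex. -/
def IsBlock {W : Type*} (G : SimpleGraph W) (S : Set W) : Prop :=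
  S.Nonempty ∧ (G.induce S).Connected ∧
    (∀ v ∈ S, S = {v} ∨ (G.induce (S \ {v})).Connected) ∧
    ∀ T : Set W, S ⊆ T → (G.induce T).Connected →
      (∀ v ∈ T, T = {v} ∨ (G.induce (T \ {v})).Connected) → S = T

/-!
In `B_f(H)` the part `V_H` dominates, and condition (2) yields an injection of `V_H` into every
dominating set `D`: a vertex of `H` outside `D` is charged to a neighbour in `D`, and two adjacent
such vertices `x, y` with `f(H[x]) = f(H[y]) = 0`, which might compete for the same neighbour, are
separated by the two copies of `H[x,y]`, both forced into `D`. Hence `γ(B_f(H)) = |V_H|`. As the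
bipartition of a connected graph is unique, `|V_H|` is `|A|` or `|B|`, and `γ(G) ≤ |A| ≤ |B|`.

Conversely, let `u ~ v` in `H` on `A` when `u, v` have a common neighbour, and let `f(K)` count
the vertices of `B` with neighbourhood `K`; then `G ≅ B_f(H)`. If (2) failed at `uv`, a common
neighbour of `u` and `v` (one with neighbourhood exactly `{u, v}`, if any) could replace both of
them in `A`, a dominating set of size `|A| - 1`.
-/

section Domination

variable {W W' : Type*} {G : SimpleGraph W} {G' : SimpleGraph W'} {D : Set W}

lemma domNum_le_ncard (hD : IsDomSet G D) : domNum G ≤ D.ncard :=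
  Nat.sInf_le ⟨D, hD, rfl⟩

lemma le_domNum {n : ℕ} (h : ∀ D, IsDomSet G D → n ≤ D.ncard) : n ≤ domNum G :=
  le_csInf ⟨_, Set.univ, fun v hv => absurd (Set.mem_univ v) hv, rfl⟩
    fun _ ⟨D, hD, hn⟩ => hn ▸ h D hD

lemma IsDomSet.mem_of_forall_adj_notMem (hD : IsDomSet G D) {v : W}
    (h : ∀ u, G.Adj u v → u ∉ D) : v ∈ D := by
  by_contra hv
  obtain ⟨u, hu, huv⟩ := hD v hv
  exact h u huv hu

lemma IsDomSet.image_iso (hD : IsDomSet G D) (e : G ≃g G') : IsDomSet G' (e '' D) := by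
  intro v hv
  obtain ⟨u, hu, huv⟩ := hD (e.symm v) fun h => hv ⟨_, h, e.apply_symm_apply v⟩
  exact ⟨e u, Set.mem_image_of_mem e hu, by simpa using e.map_adj_iff.mpr huv⟩

lemma domNum_congr (e : G ≃g G') : domNum G = domNum G' := by
  unfold domNum
  congr 1
  ext n
  constructor
  · rintro ⟨D, hD, rfl⟩
    exact ⟨_, hD.image_iso e, Set.ncard_image_of_injective D e.injective⟩
  · rintro ⟨D, hD, rfl⟩
    exact ⟨_, hD.image_iso e.symm, Set.ncard_image_of_injective D e.symm.injective⟩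

end Domination

namespace SimpleGraph

variable {W W' : Type*} {G : SimpleGraph W} {G' : SimpleGraph W'} {s t : Set W}

lemma IsBipartiteWith.comap {s t : Set W'} (h : G'.IsBipartiteWith s t) (φ : G →g G') :
    G.IsBipartiteWith (φ ⁻¹' s) (φ ⁻¹' t) :=
  ⟨h.disjoint.preimage φ, fun _ _ hadj => h.mem_of_adj (φ.map_adj hadj)⟩

lemma IsBipartiteWith.mem_iff_mem_iff_of_walk (hs : G.IsBipartiteWith s sᶜ)
    (ht : G.IsBipartiteWith t tᶜ) {x y : W} (p : G.Walk x y) :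
    ((x ∈ s ↔ y ∈ s) ↔ (x ∈ t ↔ y ∈ t)) := by
  induction p with
  | nil => simp
  | cons h _ ih =>
    have hs' := hs.mem_of_adj h
    have ht' := ht.mem_of_adj h
    simp only [Set.mem_compl_iff] at hs' ht'
    tauto

lemma IsBipartiteWith.eq_or_eq_compl (ht : G.IsBipartiteWith t tᶜ) (hG : G.Connected)
    (hs : G.IsBipartiteWith s sᶜ) : t = s ∨ t = sᶜ := by
  obtain ⟨x⟩ := hG.nonempty
  have hpar := fun y => hs.mem_iff_mem_iff_of_walk ht (hG.preconnected x y).some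
  by_cases hx : x ∈ s ↔ x ∈ t
  · left
    ext y
    have := hpar y
    tauto
  · right
    ext y
    have := hpar y
    rw [Set.mem_compl_iff]
    tauto

end SimpleGraph

section Bipartization

variable {U : Type*} {H : SimpleGraph U} {f : Finset U → ℕ} {D : Set (BVert H f)}

@[simp] lemma bip_adj_inl_inr {x : U} {p : Σ K : CliqueSet H, Fin (f K.1)} :
    (Bip H f).Adj (Sum.inl x) (Sum.inr p) ↔ x ∈ p.1.1 := by
  refine ⟨?_, fun h => Or.inl ⟨x, p, rfl, rfl, h⟩⟩
  rintro (⟨y, q, hxy, hpq, hy⟩ | ⟨_, _, h, _⟩)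
  · obtain rfl := Sum.inl_injective hxy
    obtain rfl := Sum.inr_injective hpq
    exact hy
  · exact absurd h Sum.inr_ne_inl

@[simp] lemma bip_adj_inr_inl {x : U} {p : Σ K : CliqueSet H, Fin (f K.1)} :
    (Bip H f).Adj (Sum.inr p) (Sum.inl x) ↔ x ∈ p.1.1 :=
  (Bip H f).adj_comm _ _ |>.trans bip_adj_inl_inr

@[simp] lemma bip_not_adj_inl_inl {x y : U} : ¬ (Bip H f).Adj (Sum.inl x) (Sum.inl y) := by
  simp [Bip]

@[simp] lemma bip_not_adj_inr_inr {p q : Σ K : CliqueSet H, Fin (f K.1)} :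
    ¬ (Bip H f).Adj (Sum.inr p) (Sum.inr q) := by
  simp [Bip]

lemma bip_isBipartiteWith :
    (Bip H f).IsBipartiteWith (Set.range Sum.inl) (Set.range Sum.inl)ᶜ := by
  refine ⟨disjoint_compl_right, ?_⟩
  rintro (x | p) (y | q) h <;> simp_all

lemma isDomSet_range_inl : IsDomSet (Bip H f) (Set.range Sum.inl) := by
  rintro (x | ⟨K, i⟩) hv
  · exact absurd ⟨x, rfl⟩ hv
  · obtain ⟨x, hx⟩ := K.2.1
    exact ⟨Sum.inl x, ⟨x, rfl⟩, bip_adj_inl_inr.2 hx⟩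

lemma IsDomSet.inr_mem_of_bip (hD : IsDomSet (Bip H f) D) {p : Σ K : CliqueSet H, Fin (f K.1)}
    (hp : ∀ x ∈ p.1.1, Sum.inl x ∉ D) : Sum.inr p ∈ D :=
  hD.mem_of_forall_adj_notMem <| by
    rintro (x | q) h
    · exact hp x (bip_adj_inl_inr.1 h)
    · exact absurd h bip_not_adj_inr_inr

lemma IsDomSet.exists_inr_mem_of_bip (hD : IsDomSet (Bip H f) D) {x : U}
    (hx : Sum.inl x ∉ D) : ∃ p, Sum.inr p ∈ D ∧ x ∈ p.1.1 := by
  obtain ⟨y | p, hy, h⟩ := hD _ hx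
  · exact absurd h bip_not_adj_inl_inl
  · exact ⟨p, hy, bip_adj_inr_inl.1 h⟩

lemma isCliqueF_singleton (H : SimpleGraph U) (u : U) : IsCliqueF H {u} :=
  ⟨Finset.singleton_nonempty u, by
    simp only [Finset.mem_singleton]
    rintro x rfl y rfl h
    exact absurd rfl h⟩

variable [DecidableEq U]

lemma isCliqueF_pair {u v : U} (h : H.Adj u v) : IsCliqueF H {u, v} := by
  refine ⟨Finset.insert_nonempty u {v}, ?_⟩
  simp only [Finset.mem_insert, Finset.mem_singleton]
  rintro x (rfl | rfl) y (rfl | rfl) hxy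
  exacts [absurd rfl hxy, h, h.symm, absurd rfl hxy]

/-- A vertex `x ∉ D` is charged to a neighbour in `D`: the pendant copy of `H[x]` if
`f(H[x]) > 0`, else a copy of `H[x,y]` if some neighbour `y ∉ D` has `f(H[y]) = 0` (both copies
lie in `D`, and comparing `g x` with `g y` gives `x` and `y` different ones), else any dominator
of `x`. -/
lemma IsDomSet.exists_charge_of_bip
    (hf : ∀ u v : U, H.Adj u v → f {u} = 0 → f {v} = 0 → 2 ≤ f {u, v})
    (hD : IsDomSet (Bip H f) D) (g : U → ℕ) {x : U} (hx : Sum.inl x ∉ D) :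
    ∃ p : Σ K : CliqueSet H, Fin (f K.1), Sum.inr p ∈ D ∧ x ∈ p.1.1 ∧
      (0 < f {x} → p.1.1 = {x}) ∧
      ∀ y, H.Adj x y → Sum.inl y ∉ D → f {x} = 0 → f {y} = 0 →
        ∃ y', p.1.1 = {x, y'} ∧ (p.2 : ℕ) = if g x < g y' then 0 else 1 := by
  by_cases hx₁ : 0 < f {x}
  · refine ⟨⟨⟨{x}, isCliqueF_singleton H x⟩, ⟨0, hx₁⟩⟩, hD.inr_mem_of_bip ?_, by simp,
      fun _ => rfl, fun _ _ _ h => absurd h hx₁.ne'⟩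
    simpa using hx
  by_cases hpair : ∃ y, H.Adj x y ∧ Sum.inl y ∉ D ∧ f {y} = 0
  · obtain ⟨y, hxy, hy, hy₀⟩ := hpair
    have h₂ : 2 ≤ f {x, y} := hf x y hxy (by omega) hy₀
    refine ⟨⟨⟨{x, y}, isCliqueF_pair hxy⟩, ⟨if g x < g y then 0 else 1,
      (by split_ifs <;> omega : (if g x < g y then 0 else 1) < f {x, y})⟩⟩,
      hD.inr_mem_of_bip ?_, by simp, fun h => absurd h hx₁, fun _ _ _ _ _ => ⟨y, rfl, rfl⟩⟩
    simp only [Finset.mem_insert, Finset.mem_singleton]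
    rintro z (rfl | rfl) <;> assumption
  · obtain ⟨p, hp, hxp⟩ := hD.exists_inr_mem_of_bip hx
    simp only [not_exists, not_and] at hpair
    exact ⟨p, hp, hxp, fun h => absurd h hx₁, fun y hxy hy _ hy₀ => absurd hy₀ (hpair y hxy hy)⟩

lemma IsDomSet.nat_card_le_ncard_of_bip [Finite U]
    (hf : ∀ u v : U, H.Adj u v → f {u} = 0 → f {v} = 0 → 2 ≤ f {u, v})
    (hD : IsDomSet (Bip H f) D) : Nat.card U ≤ D.ncard := by
  classical
  obtain ⟨g, hg⟩ : ∃ g : U → ℕ, g.Injective :=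
    ⟨_, Fin.val_injective.comp (Finite.equivFin U).injective⟩
  choose p hpD hxp hsingle hpair using fun x (hx : Sum.inl x ∉ D) => hD.exists_charge_of_bip hf g hx
  have hf₀ : ∀ x x' hx hx', p x hx = p x' hx' → x ≠ x' → f {x} = 0 := by
    intro x x' hx hx' he hne
    by_contra h
    have hx' := hxp x' hx'
    rw [← he, hsingle x hx (by omega), Finset.mem_singleton] at hx'
    exact hne hx'.symm
  have hp : ∀ x x' hx hx', p x hx = p x' hx' → x = x' := by
    intro x x' hx hx' he
    by_contra hne
    have hadj : H.Adj x x' := (p x hx).1.2.2 x (hxp x hx) x' (he ▸ hxp x' hx') hne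
    obtain ⟨y, hK, hi⟩ :=
      hpair x hx x' hadj hx' (hf₀ x x' hx hx' he hne) (hf₀ x' x hx' hx he.symm (Ne.symm hne))
    obtain ⟨y', hK', hi'⟩ :=
      hpair x' hx' x hadj.symm hx (hf₀ x' x hx' hx he.symm (Ne.symm hne)) (hf₀ x x' hx hx' he hne)
    rw [he] at hK hi
    have hy : x' ∈ ({x, y} : Finset U) := hK ▸ hxp x' hx'
    have hy' : x ∈ ({x', y'} : Finset U) := hK' ▸ he ▸ hxp x hx
    simp only [Finset.mem_insert, Finset.mem_singleton, hne, Ne.symm hne, false_or] at hy hy'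
    subst hy hy'
    have := hg.ne hne
    rw [hi] at hi'
    split_ifs at hi' <;> omega
  let ψ : U → D := fun x => if hx : Sum.inl x ∈ D then ⟨_, hx⟩ else ⟨_, hpD x hx⟩
  have hψ : ψ.Injective := by
    intro x x' h
    simp only [ψ] at h
    split_ifs at h with hx hx' hx' <;>
      simp only [Subtype.mk.injEq, Sum.inl.injEq, Sum.inr.injEq, reduceCtorEq] at h
    · exact h
    · exact hp x x' hx hx' h
  exact (Nat.card_le_card_of_injective ψ hψ).trans_eq (Nat.card_coe_set_eq D)

theorem domNum_bip [Finite U] (hf : ∀ u v : U, H.Adj u v → f {u} = 0 → f {v} = 0 → 2 ≤ f {u, v}) :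
    domNum (Bip H f) = Nat.card U :=
  le_antisymm
    ((domNum_le_ncard isDomSet_range_inl).trans_eq (Set.ncard_range_of_injective Sum.inl_injective))
    (le_domNum fun _ hD => hD.nat_card_le_ncard_of_bip hf)

end Bipartization

section CommonNeighbors

variable {W : Type*} (G : SimpleGraph W) (A : Set W)

def commonNbrGraph : SimpleGraph A where
  Adj u v := u ≠ v ∧ ∃ b, G.Adj u b ∧ G.Adj v b
  symm := ⟨fun _ _ ⟨hne, b, hu, hv⟩ => ⟨hne.symm, b, hv, hu⟩⟩
  loopless := ⟨fun _ h => h.1 rfl⟩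

variable {G A}

lemma exists_adj_of_notMem (hG : G.Connected) (hbip : G.IsBipartiteWith A Aᶜ) (hA : A.Nonempty)
    {b : W} (hb : b ∉ A) : ∃ a : A, G.Adj a b := by
  obtain ⟨a, ha⟩ := hA
  have : Nontrivial W := ⟨⟨a, b, fun h => hb (h ▸ ha)⟩⟩
  obtain ⟨z, hz⟩ := hG.preconnected.exists_adj_of_nontrivial b
  exact ⟨⟨z, hbip.symm.mem_of_mem_adj hb hz⟩, hz.symm⟩

lemma isDomSet_of_isBipartiteWith (hG : G.Connected) (hbip : G.IsBipartiteWith A Aᶜ)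
    (hA : A.Nonempty) : IsDomSet G A := fun _ hb =>
  let ⟨a, ha⟩ := exists_adj_of_notMem hG hbip hA hb
  ⟨a, a.2, ha⟩

lemma commonNbrGraph_reachable_of_walk (hbip : G.IsBipartiteWith A Aᶜ) {x y : W}
    (p : G.Walk x y) (hy : y ∈ A) :
    (∀ hx : x ∈ A, (commonNbrGraph G A).Reachable ⟨x, hx⟩ ⟨y, hy⟩) ∧
      (x ∉ A → ∃ a : A, G.Adj x a ∧ (commonNbrGraph G A).Reachable a ⟨y, hy⟩) := by
  induction p with
  | nil => exact ⟨fun _ => .refl _, fun hx => absurd hy hx⟩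
  | @cons x z y hxz p ih =>
    refine ⟨fun hx => ?_, fun hx => ⟨⟨z, hbip.symm.mem_of_mem_adj hx hxz⟩, hxz, (ih hy).1 _⟩⟩
    obtain ⟨a, hza, ha⟩ := (ih hy).2 (hbip.mem_of_mem_adj hx hxz)
    by_cases hxa : ⟨x, hx⟩ = a
    · exact hxa ▸ ha
    · exact (show (commonNbrGraph G A).Adj _ a from ⟨hxa, z, hxz, hza.symm⟩).reachable.trans ha

lemma commonNbrGraph_connected (hG : G.Connected) (hbip : G.IsBipartiteWith A Aᶜ)
    (hA : A.Nonempty) : (commonNbrGraph G A).Connected :=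
  have : Nonempty A := hA.to_subtype
  ⟨fun u v => (commonNbrGraph_reachable_of_walk hbip (hG.preconnected u v).some v.2).1 u.2⟩

variable [Finite W]

variable (G A) in
noncomputable def trace (b : W) : Finset A := (Set.toFinite {a : A | G.Adj a b}).toFinset

variable (G A) in
noncomputable def traceMult (K : Finset A) : ℕ := Nat.card {b : ↥Aᶜ // trace G A b = K}

@[simp] lemma mem_trace {b : W} {a : A} : a ∈ trace G A b ↔ G.Adj a b :=
  Set.Finite.mem_toFinset _

lemma trace_nonempty (hG : G.Connected) (hbip : G.IsBipartiteWith A Aᶜ) (hA : A.Nonempty)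
    {b : W} (hb : b ∉ A) : (trace G A b).Nonempty :=
  let ⟨a, ha⟩ := exists_adj_of_notMem hG hbip hA hb
  ⟨a, mem_trace.2 ha⟩

lemma isCliqueF_trace {b : W} (hb : (trace G A b).Nonempty) :
    IsCliqueF (commonNbrGraph G A) (trace G A b) :=
  ⟨hb, fun _ hx _ hy hxy => ⟨hxy, b, mem_trace.1 hx, mem_trace.1 hy⟩⟩

lemma one_le_traceMult {b : W} (hb : b ∉ A) : 1 ≤ traceMult G A (trace G A b) :=
  have : Nonempty {c : ↥Aᶜ // trace G A c = trace G A b} := ⟨⟨⟨b, hb⟩, rfl⟩⟩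
  Nat.card_pos

lemma two_le_traceMult {b b' : W} (hb : b ∉ A) (hb' : b' ∉ A) (hne : b ≠ b')
    (h : trace G A b = trace G A b') : 2 ≤ traceMult G A (trace G A b) :=
  have : Nontrivial {c : ↥Aᶜ // trace G A c = trace G A b} :=
    ⟨⟨⟨b, hb⟩, rfl⟩, ⟨⟨b', hb'⟩, h.symm⟩, fun he => hne congr($he.1.1)⟩
  Finite.one_lt_card_iff_nontrivial.2 this

theorem nonempty_iso_bip (hbip : G.IsBipartiteWith A Aᶜ) (H : SimpleGraph A)
    (hH : ∀ b ∉ A, IsCliqueF H (trace G A b)) : Nonempty (G ≃g Bip H (traceMult G A)) := by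
  classical
  let cl : ↥Aᶜ → CliqueSet H := fun b => ⟨trace G A b, hH b b.2⟩
  let e : ↥Aᶜ ≃ Σ K : CliqueSet H, Fin (traceMult G A K.1) :=
    (Equiv.sigmaFiberEquiv cl).symm.trans <| Equiv.sigmaCongrRight fun _ =>
      (Equiv.subtypeEquivRight fun _ => Subtype.ext_iff).trans (Finite.equivFin _)
  let eW : W ≃ BVert H (traceMult G A) :=
    (Equiv.Set.sumCompl A).symm.trans (Equiv.sumCongr (Equiv.refl _) e)
  have hin : ∀ x (hx : x ∈ A), eW x = Sum.inl ⟨x, hx⟩ := fun x hx => by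
    simp [eW, Equiv.Set.sumCompl_symm_apply_of_mem hx]
  have hout : ∀ x (hx : x ∉ A), ∃ p, eW x = Sum.inr p ∧ p.1.1 = trace G A x := fun x hx =>
    ⟨e ⟨x, hx⟩, by simp [eW, Equiv.Set.sumCompl_symm_apply_of_notMem hx], rfl⟩
  refine ⟨⟨eW, fun {x y} => ?_⟩⟩
  by_cases hx : x ∈ A <;> by_cases hy : y ∈ A
  · simp only [hin x hx, hin y hy, bip_not_adj_inl_inl, false_iff]
    exact fun h => hbip.mem_of_mem_adj hx h hy
  · obtain ⟨p, hp, hpy⟩ := hout y hy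
    simp [hin x hx, hp, hpy]
  · obtain ⟨p, hp, hpx⟩ := hout x hx
    simp [hin y hy, hp, hpx, G.adj_comm x]
  · obtain ⟨p, hp, -⟩ := hout x hx
    obtain ⟨q, hq, -⟩ := hout y hy
    simp only [hp, hq, bip_not_adj_inr_inr, false_iff]
    exact fun h => hbip.symm.mem_of_mem_adj hx h |> hy

/-- Otherwise `(A \ T) ∪ {b₀}` would be a dominating set smaller than `A`. -/
lemma exists_trace_subset (hdom : A.ncard ≤ domNum G) {T : Finset A} (hT : 2 ≤ T.card)
    {b₀ : W} (hT₀ : ∀ t ∈ T, G.Adj t b₀) :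
    ∃ b ∉ A, b ≠ b₀ ∧ trace G A b ⊆ T := by
  by_contra! h
  set S : Set W := Subtype.val '' (T : Set A)
  have hSA : S ⊆ A := by
    rintro _ ⟨t, _, rfl⟩
    exact t.2
  have hS : S.ncard = T.card := by
    rw [Set.ncard_image_of_injective _ Subtype.val_injective, Set.ncard_coe_finset]
  have hD : IsDomSet G ((A \ S) ∪ {b₀}) := by
    intro w hw
    simp only [Set.mem_union, Set.mem_sdiff, Set.mem_singleton_iff, not_or, not_and_or,
      not_not] at hw
    by_cases hwA : w ∈ A
    · obtain ⟨t, ht, rfl⟩ := hw.1.resolve_left (not_not.2 hwA)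
      exact ⟨b₀, Or.inr rfl, (hT₀ t ht).symm⟩
    · obtain ⟨a, haw, haT⟩ := Finset.not_subset.1 (h w hwA hw.2)
      refine ⟨a, Or.inl ⟨a.2, ?_⟩, mem_trace.1 haw⟩
      rintro ⟨t, ht, hta⟩
      exact haT (Subtype.ext hta ▸ ht)
  have hle := (domNum_le_ncard hD).trans (Set.ncard_union_le _ _)
  rw [Set.ncard_sdiff hSA, hS, Set.ncard_singleton] at hle
  have : T.card ≤ A.ncard := hS ▸ Set.ncard_le_ncard hSA
  omega

lemma trace_eq_pair [DecidableEq A] {u v : A} (hu : traceMult G A {u} = 0)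
    (hv : traceMult G A {v} = 0) {b : W} (hb : b ∉ A) (hne : (trace G A b).Nonempty)
    (hsub : trace G A b ⊆ {u, v}) : trace G A b = {u, v} := by
  have hsingle : ∀ w, traceMult G A {w} = 0 → trace G A b ≠ {w} := fun w hw h => by
    have := one_le_traceMult (G := G) hb
    rw [h] at this
    omega
  refine hsub.antisymm (Finset.insert_subset_iff.2 ⟨?_, Finset.singleton_subset_iff.2 ?_⟩)
  · by_contra h
    exact hsingle v hv (hne.subset_singleton_iff.1 ((Finset.subset_insert_iff_of_notMem h).1 hsub))
  · by_contra h
    rw [Finset.pair_comm] at hsub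
    exact hsingle u hu (hne.subset_singleton_iff.1 ((Finset.subset_insert_iff_of_notMem h).1 hsub))

lemma two_le_traceMult_pair [DecidableEq A] (hdom : A.ncard ≤ domNum G)
    (hne : ∀ b ∉ A, (trace G A b).Nonempty) {u v : A} (huv : (commonNbrGraph G A).Adj u v)
    (hu : traceMult G A {u} = 0) (hv : traceMult G A {v} = 0) : 2 ≤ traceMult G A {u, v} := by
  obtain ⟨huv, b₀, hub₀, hvb₀⟩ := huv
  have hcard : 2 ≤ ({u, v} : Finset A).card := (Finset.card_pair huv).ge
  obtain ⟨b₁, hb₁, -, h₁⟩ :=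
    exists_trace_subset (b₀ := b₀) hdom hcard (by simp [hub₀, hvb₀])
  replace h₁ := trace_eq_pair hu hv hb₁ (hne b₁ hb₁) h₁
  obtain ⟨b₂, hb₂, hne₂, h₂⟩ :=
    exists_trace_subset hdom hcard fun t ht => mem_trace.1 (h₁ ▸ ht)
  replace h₂ := trace_eq_pair hu hv hb₂ (hne b₂ hb₂) h₂
  exact h₁ ▸ two_le_traceMult hb₁ hb₂ hne₂.symm (h₁.trans h₂.symm)

end CommonNeighbors

theorem domNum_eq_card_iff_bipartization (W : Type) [Fintype W] (G : SimpleGraph W)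
    (A B : Set W) (hconn : G.Connected)
    (hdisj : Disjoint A B) (hcover : A ∪ B = Set.univ)
    (hbip : ∀ u v : W, G.Adj u v → (u ∈ A ∧ v ∈ B) ∨ (u ∈ B ∧ v ∈ A))
    (hA : 1 ≤ A.ncard) (hAB : A.ncard ≤ B.ncard) :
    domNum G = A.ncard ↔
      ∃ (U : Type) (_ : Fintype U) (_ : DecidableEq U) (H : SimpleGraph U)
        (f : Finset U → ℕ),
        H.Connected ∧
        (∃ K : Finset U, IsCliqueF H K ∧ 1 ≤ f K) ∧
        (∀ u v : U, H.Adj u v → f {u, v} = 0 →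
          ∃ K : Finset U, IsCliqueF H K ∧ u ∈ K ∧ v ∈ K ∧ 0 < f K) ∧
        (∀ u v : U, H.Adj u v → f {u} = 0 → f {v} = 0 → 2 ≤ f {u, v}) ∧
        Nonempty (G ≃g Bip H f) := by
  obtain rfl : Aᶜ = B := (IsCompl.of_eq hdisj.eq_bot hcover).compl_eq
  have hG : G.IsBipartiteWith A Aᶜ := ⟨hdisj, hbip⟩
  have hAne : A.Nonempty := Set.nonempty_of_ncard_ne_zero (by omega)
  have hγA : domNum G ≤ A.ncard := domNum_le_ncard (isDomSet_of_isBipartiteWith hconn hG hAne)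
  constructor
  · intro hdom
    classical
    have htr : ∀ b ∉ A, (trace G A b).Nonempty := fun b => trace_nonempty hconn hG hAne
    obtain ⟨b, hb⟩ : (Aᶜ).Nonempty := Set.nonempty_of_ncard_ne_zero (by omega)
    refine ⟨A, Fintype.ofFinite A, inferInstance, commonNbrGraph G A, traceMult G A,
      commonNbrGraph_connected hconn hG hAne, ⟨_, isCliqueF_trace (htr b hb), one_le_traceMult hb⟩,
      fun u v huv _ => ?_, fun u v => two_le_traceMult_pair hdom.ge htr,
      nonempty_iso_bip hG _ fun b hb => isCliqueF_trace (htr b hb)⟩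
    obtain ⟨-, b, hu, hv⟩ := huv
    have hb : b ∉ A := hG.mem_of_mem_adj u.2 hu
    exact ⟨_, isCliqueF_trace (htr b hb), mem_trace.2 hu, mem_trace.2 hv, one_le_traceMult hb⟩
  · rintro ⟨U, _, _, H, f, -, -, -, hf, ⟨e⟩⟩
    have hγU : domNum G = Nat.card U := (domNum_congr e).trans (domNum_bip hf)
    have hU : (e ⁻¹' Set.range Sum.inl).ncard = Nat.card U := by
      rw [Set.ncard_preimage_of_injective_subset_range e.injective
        (by simp [e.surjective.range_eq]), Set.ncard_range_of_injective Sum.inl_injective]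
    have hside := (bip_isBipartiteWith.comap e.toHom).eq_or_eq_compl hconn hG
    change e ⁻¹' _ = A ∨ e ⁻¹' _ = Aᶜ at hside
    rcases hside with h | h <;> rw [h] at hU <;> omega
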